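/- arXiv:math/0310488 — 2 statements merged into one kernel-verified Lean document; each statement's English description precedes it below -/
import Mathlib

section
/- For every real q ≥ 3, one has β_c(q)/β_c(q-1) < q, where β_c(x) = 2(x-1)/(x-2)·log(x-1) for x > 2 and β_c(2) = 4. -/
/-!
For `x > 2` write `β_c(x) = 2 (x - 1) log (x - 1) / (x - 2)`. The two elementary bounds
`log t ≤ t - 1` and `t log t ≥ t - 1` (at `t = x - 1`) squeeze `β_c` between `2` and `2 (x - 1)`,
so `β_c(q) ≤ 2 (q - 1) < 2 q ≤ q β_c(q - 1)`.
-/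

/-- Mean-field Potts critical inverse temperature, extended continuously by `β_c(2) = 4`. -/
noncomputable def betac (x : ℝ) : ℝ :=
  if x = 2 then 4 else 2 * (x - 1) / (x - 2) * Real.log (x - 1)

open Real

lemma betac_of_ne_two {x : ℝ} (hx : x ≠ 2) :
    betac x = 2 * ((x - 1) * log (x - 1)) / (x - 2) := by
  rw [betac, if_neg hx]
  ring

lemma betac_le {x : ℝ} (hx : 2 < x) : betac x ≤ 2 * (x - 1) := by
  rw [betac_of_ne_two hx.ne', div_le_iff₀ (by linarith)]
  have := log_le_sub_one_of_pos (show 0 < x - 1 by linarith)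
  nlinarith

lemma two_le_betac {x : ℝ} (hx : 2 ≤ x) : 2 ≤ betac x := by
  rcases hx.eq_or_lt with rfl | hx
  · norm_num [betac]
  · rw [betac_of_ne_two hx.ne', le_div_iff₀ (by linarith)]
    have := self_sub_one_le_mul_log (show 0 ≤ x - 1 by linarith)
    linarith

/-- For every real `q ≥ 3`, `β_c(q)/β_c(q-1) < q`. -/
theorem betac_ratio_lt (q : ℝ) (hq : 3 ≤ q) : betac q / betac (q - 1) < q := by
  have hlower : 2 ≤ betac (q - 1) := two_le_betac (by linarith)
  rw [div_lt_iff₀ (by linarith)]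
  calc betac q ≤ 2 * (q - 1) := betac_le (by linarith)
    _ < 2 * q := by linarith
    _ ≤ q * betac (q - 1) := by nlinarith
end

section
/- Let q > r ≥ 2 be integers, β ≥ β_c(q), and let u = u(q,β) be the largest solution of the mean-field equation u = (1-e^{-βu})/(1+(q-1)e^{-βu}), which is increasing in β and satisfies u(q,β_c(q)) = (q-2)/(q-1). Then the typical fuzzy density n⁻ = (1-u)r/q satisfies n⁻ < β_c(r)/β, assuming the auxiliary facts: β_c(x)/x is decreasing, β_c(x) < x for x > 2, and β_c(q)/β_c(q-1) < q. -/
open Real Set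

lemma betac_pos {x : ℝ} (hx : 2 ≤ x) : 0 < betac x := by
  unfold betac
  split_ifs with h2
  · norm_num
  · have hx2 : 2 < x := lt_of_le_of_ne hx (Ne.symm h2)
    exact mul_pos (div_pos (by linarith) (by linarith)) (log_pos (by linarith))

/-- The inverse temperature `β` at which `v` solves `v = (1 - e^{-βv}) / (1 + c e^{-βv})`. -/
noncomputable def meanFieldTemp (c v : ℝ) : ℝ := (log (1 + c * v) - log (1 - v)) / v

lemma lt_one_and_eq_meanFieldTemp {b c v : ℝ} (hc : 0 ≤ c) (hv : v ≠ 0)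
    (h : v = (1 - exp (-b * v)) / (1 + c * exp (-b * v))) :
    v < 1 ∧ b = meanFieldTemp c v := by
  set e := exp (-b * v) with he
  have he0 : 0 < e := exp_pos _
  have hden : 0 < 1 + c * e := by positivity
  have hv1 : v < 1 := by
    rw [h, div_lt_one hden]
    nlinarith
  have hsolve : e * (1 + c * v) = 1 - v := by
    rw [eq_div_iff hden.ne'] at h
    linear_combination h
  have h1 : 0 < 1 - v := by linarith
  have h2 : 0 < 1 + c * v := pos_of_mul_pos_right (hsolve ▸ h1) he0.le
  refine ⟨hv1, eq_div_of_mul_eq hv ?_⟩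
  have hlog := congrArg log hsolve
  rw [log_mul he0.ne' h2.ne', he, log_exp] at hlog
  linarith

lemma mul_div_one_add_mul_le_log_sub_log {c v : ℝ} (hc : -1 ≤ c) (hv0 : 0 < v) (hv1 : v < 1) :
    (c + 1) * v / (1 + c * v) ≤ log (1 + c * v) - log (1 - v) := by
  have h1 : 0 < 1 - v := by linarith
  have h2 : 0 < 1 + c * v := by nlinarith
  have hlog := one_sub_inv_le_log_of_pos (div_pos h2 h1)
  rw [log_div h2.ne' h1.ne', inv_div] at hlog
  convert hlog using 1
  field_simp
  ring

lemma hasDerivAt_one_sub_mul_meanFieldTemp {c v : ℝ} (hc : -1 ≤ c) (hv : v ∈ Ioo (0 : ℝ) 1) :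
    HasDerivAt (fun v => (1 - v) * meanFieldTemp c v)
      (((c + 1) * v / (1 + c * v) - (log (1 + c * v) - log (1 - v))) / v ^ 2) v := by
  obtain ⟨hv0, hv1⟩ := hv
  have h1 : 0 < 1 - v := by linarith
  have h2 : 0 < 1 + c * v := by nlinarith
  have hlog : HasDerivAt (fun v => log (1 + c * v) - log (1 - v))
      (c / (1 + c * v) + 1 / (1 - v)) v := by
    refine ((((hasDerivAt_id v).const_mul c).const_add 1).log h2.ne' |>.sub
      (((hasDerivAt_id v).const_sub 1).log h1.ne')).congr_deriv ?_
    simp only [id]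
    ring
  refine (((hasDerivAt_id v).const_sub 1).mul (hlog.div (hasDerivAt_id v) hv0.ne')).congr_deriv ?_
  simp only [id, Pi.div_apply]
  field_simp
  ring

lemma antitoneOn_one_sub_mul_meanFieldTemp {c : ℝ} (hc : -1 ≤ c) :
    AntitoneOn (fun v => (1 - v) * meanFieldTemp c v) (Ioo 0 1) := by
  refine antitoneOn_of_hasDerivWithinAt_nonpos (convex_Ioo 0 1)
    (f' := fun v => ((c + 1) * v / (1 + c * v) - (log (1 + c * v) - log (1 - v))) / v ^ 2)
    (fun v hv => (hasDerivAt_one_sub_mul_meanFieldTemp hc hv).continuousAt.continuousWithinAt)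
    (fun v hv => ?_) (fun v hv => ?_) <;> rw [interior_Ioo] at hv
  · exact (hasDerivAt_one_sub_mul_meanFieldTemp hc hv).hasDerivWithinAt
  · have := mul_div_one_add_mul_le_log_sub_log hc hv.1 hv.2
    exact div_nonpos_of_nonpos_of_nonneg (by linarith) (by positivity)

lemma one_sub_mul_meanFieldTemp_critical {q : ℝ} (hq : 2 < q) :
    (1 - (q - 2) / (q - 1)) * meanFieldTemp (q - 1) ((q - 2) / (q - 1)) = betac q / (q - 1) := by
  have hq1 : q - 1 ≠ 0 := by linarith
  have h1 : 1 + (q - 1) * ((q - 2) / (q - 1)) = q - 1 := by field_simp; ring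
  have h2 : 1 - (q - 2) / (q - 1) = (q - 1)⁻¹ := by field_simp; ring
  rw [meanFieldTemp, h1, h2, log_inv, betac, if_neg hq.ne']
  field_simp
  ring

lemma betac_div_sub_one_mul_lt {q r : ℝ} (hr : 2 ≤ r) (hrq : r ≤ q - 1)
    (hanti : AntitoneOn (fun x => betac x / x) (Ici 2)) (hstep : betac q / betac (q - 1) < q) :
    betac q / (q - 1) * r < q * betac r := by
  have hq1 : 0 < q - 1 := by linarith
  have hstep' : betac q < q * betac (q - 1) :=
    (div_lt_iff₀ (betac_pos (by linarith))).mp hstep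
  calc betac q / (q - 1) * r < q * betac (q - 1) / (q - 1) * r := by gcongr
    _ = q * r * (betac (q - 1) / (q - 1)) := by ring
    _ ≤ q * r * (betac r / r) :=
      mul_le_mul_of_nonneg_left (hanti (mem_Ici.2 hr) (mem_Ici.2 (by linarith)) hrq)
        (by nlinarith)
    _ = q * betac r := by field_simp

theorem nminus_lt_threshold_general (q r : ℕ) (hr : 2 ≤ r) (hrq : r < q)
    (u : ℝ → ℝ)
    (hmeanfield : ∀ β' : ℝ, betac q ≤ β' →
      u β' = (1 - Real.exp (-β' * u β'))
              / (1 + ((q : ℝ) - 1) * Real.exp (-β' * u β')))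
    (hmono : MonotoneOn u (Set.Ici (betac q)))
    (hcrit : u (betac q) = ((q : ℝ) - 2) / ((q : ℝ) - 1))
    (haux1 : StrictAntiOn (fun x : ℝ => betac x / x) (Set.Ici (2 : ℝ)))
    (haux3 : betac q / betac ((q : ℝ) - 1) < (q : ℝ))
    (β : ℝ) (hβ : betac q ≤ β) :
    (1 - u β) * (r : ℝ) / (q : ℝ) < betac r / β := by
  have hr' : (2 : ℝ) ≤ r := by exact_mod_cast hr
  have hrq' : (r : ℝ) ≤ q - 1 := by
    have : (r : ℝ) + 1 ≤ q := by exact_mod_cast hrq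
    linarith
  have hβ_pos : 0 < β := (betac_pos (by linarith)).trans_le hβ
  have hcrit_le : ((q : ℝ) - 2) / (q - 1) ≤ u β := hcrit ▸ hmono self_mem_Ici hβ hβ
  have hcrit_mem : ((q : ℝ) - 2) / (q - 1) ∈ Ioo 0 1 :=
    ⟨div_pos (by linarith) (by linarith), (div_lt_one (by linarith)).2 (by linarith)⟩
  have hu_pos : 0 < u β := hcrit_mem.1.trans_le hcrit_le
  obtain ⟨hu_lt_one, hβu⟩ := lt_one_and_eq_meanFieldTemp (by linarith) hu_pos.ne' (hmeanfield β hβ)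
  have hgap : β * (1 - u β) ≤ betac q / (q - 1) := calc
    β * (1 - u β) = (1 - u β) * meanFieldTemp (q - 1) (u β) := by rw [← hβu, mul_comm]
    _ ≤ (1 - (q - 2) / (q - 1)) * meanFieldTemp (q - 1) ((q - 2) / (q - 1)) :=
      antitoneOn_one_sub_mul_meanFieldTemp (by linarith) hcrit_mem ⟨hu_pos, hu_lt_one⟩ hcrit_le
    _ = betac q / (q - 1) := one_sub_mul_meanFieldTemp_critical (by linarith)
  rw [div_lt_div_iff₀ (by linarith) hβ_pos]
  calc (1 - u β) * r * β = β * (1 - u β) * r := by ring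
    _ ≤ betac q / (q - 1) * r := by gcongr
    _ < q * betac r := betac_div_sub_one_mul_lt hr' hrq' haux1.antitoneOn haux3
    _ = betac r * q := mul_comm _ _

/-- Left inequality of Proposition (ii): for integers `q > r ≥ 2` and `β ≥ β_c(q)`,
the typical fuzzy density `n⁻ = (1-u)r/q` of a non-predominant fuzzy class satisfies
`n⁻ < β_c(r)/β`, where `u = u(q,β)` is the largest solution of the mean-field equation,
assumed increasing in `β` with `u(q, β_c(q)) = (q-2)/(q-1)`, and assuming the auxiliary
facts that `β_c(x)/x` is strictly decreasing on `[2,∞)`, that `β_c(x) < x` for `x > 2`,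
and that `β_c(q)/β_c(q-1) < q`. -/
theorem nminus_lt_threshold (q r : ℕ) (hr : 2 ≤ r) (hrq : r < q)
    (u : ℝ → ℝ)
    (hmeanfield : ∀ β' : ℝ, betac q ≤ β' →
      u β' = (1 - Real.exp (-β' * u β'))
              / (1 + ((q : ℝ) - 1) * Real.exp (-β' * u β')))
    (hmaximal : ∀ β' : ℝ, betac q ≤ β' → ∀ v : ℝ,
      v = (1 - Real.exp (-β' * v)) / (1 + ((q : ℝ) - 1) * Real.exp (-β' * v)) → v ≤ u β')
    (hmono : MonotoneOn u (Set.Ici (betac q)))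
    (hcrit : u (betac q) = ((q : ℝ) - 2) / ((q : ℝ) - 1))
    (haux1 : StrictAntiOn (fun x : ℝ => betac x / x) (Set.Ici (2 : ℝ)))
    (haux2 : ∀ x : ℝ, 2 < x → betac x < x)
    (haux3 : betac q / betac ((q : ℝ) - 1) < (q : ℝ))
    (β : ℝ) (hβ : betac q ≤ β) :
    (1 - u β) * (r : ℝ) / (q : ℝ) < betac r / β :=
  nminus_lt_threshold_general q r hr hrq u hmeanfield hmono hcrit haux1 haux3 β hβ
end
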